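/- arXiv:1501.05670 — 2 statements merged into one kernel-verified Lean document; each statement's English description precedes it below -/
import Mathlib

section
/- Let a be an Engel element of a pronilpotent (profinite) group G. Then there exist a positive integer n and a finite set of primes π such that [x, a, a, ..., a] = 1 (n copies of a) for every x in the maximal normal pro-π' subgroup O_{π'}(G) of G. -/
open scoped commutatorElement

/-- The left-normed iterated commutator `[x, y, y, ..., y]` with `n` copies of `y`. -/
def engelComm {G : Type*} [Group G] (x y : G) : ℕ → G
  | 0 => x
  | n + 1 => ⁅engelComm x y n, y⁆

/-- In a pronilpotent profinite group `G`, an element `x` belongs to the maximal normal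
pro-`π'` subgroup `O_{π'}(G)` iff its image in every finite (continuous) quotient has order
divisible by no prime in `π`. -/
def memOpiPrime {G : Type*} [Group G] [TopologicalSpace G] (π : Finset ℕ) (x : G) : Prop :=
  ∀ (N : Subgroup G) [N.Normal], IsOpen (N : Set G) →
    ∀ q ∈ π, ¬ q ∣ orderOf (QuotientGroup.mk x : G ⧸ N)

/-!
By Baire's theorem one of the closed sets `{x | [x, a, …, a] = 1}` contains a coset `b N` of an
open normal subgroup `N`; let `π` be the primes dividing `|G : N|`. In a finite quotient `G / K`
with `K ≤ N`, which is the direct product of its Sylow subgroups, a `π'`-element `x` is trivial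
in the `p`-factors with `p ∈ π`, while in a `p`-factor with `p ∉ π` it agrees with `b z` for a
`p`-element `z`, which lies in `N` because `p ∤ |G : N|`. Hence `[x, a, …, a]` vanishes factor by
factor, so in every finite quotient of `G`, and therefore in `G`.
-/

section EngelComm

variable {G : Type*} [Group G]

lemma engelComm_map {H F : Type*} [Group H] [FunLike F G H] [MonoidHomClass F G H]
    (f : F) (x y : G) (n : ℕ) : f (engelComm x y n) = engelComm (f x) (f y) n := by
  induction n with
  | zero => rfl
  | succ n ih => simp only [engelComm, commutatorElement_def, map_mul, map_inv, ih]

@[simp]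
lemma engelComm_one_left (y : G) (n : ℕ) : engelComm (1 : G) y n = 1 := by
  induction n with
  | zero => rfl
  | succ n ih => simp [engelComm, ih]

lemma continuous_engelComm [TopologicalSpace G] [IsTopologicalGroup G] (y : G) (n : ℕ) :
    Continuous fun x : G => engelComm x y n := by
  induction n with
  | zero => exact continuous_id
  | succ n ih =>
    simp only [engelComm, commutatorElement_def]
    fun_prop

end EngelComm

section Pi

variable {I : Type*} {H : I → Type*} [∀ i, Group (H i)]

lemma engelComm_pi_apply (x y : ∀ i, H i) (n : ℕ) (i : I) :
    engelComm x y n i = engelComm (x i) (y i) n :=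
  engelComm_map (Pi.evalMonoidHom H i) x y n

lemma engelComm_eq_one_of_forall_mulSingle [DecidableEq I] (S : Set I) {a b x : ∀ i, H i}
    {n : ℕ} (hx : ∀ i ∈ S, x i = 1)
    (hb : ∀ i ∉ S, ∀ w : H i, engelComm (b * Pi.mulSingle i w) a n = 1) :
    engelComm x a n = 1 := by
  funext i
  rw [engelComm_pi_apply, Pi.one_apply]
  by_cases hi : i ∈ S
  · rw [hx i hi, engelComm_one_left]
  · have := congrFun (hb i hi ((b i)⁻¹ * x i)) i
    rwa [engelComm_pi_apply, Pi.mul_apply, Pi.mulSingle_eq_same, mul_inv_cancel_left] at this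

lemma IsPGroup.pi {p : ℕ} [Finite I] (h : ∀ i, IsPGroup p (H i)) : IsPGroup p (∀ i, H i) := by
  intro g
  choose k hk using fun i => h i (g i)
  have := Fintype.ofFinite I
  refine ⟨Finset.univ.sup k, funext fun i => orderOf_dvd_iff_pow_eq_one.mp ?_⟩
  exact (orderOf_dvd_of_pow_eq_one (hk i)).trans
    (pow_dvd_pow p (Finset.le_sup (Finset.mem_univ i)))

end Pi

section PGroup

variable {p : ℕ} [Fact p.Prime] {G : Type*} [Group G]

lemma IsPGroup.eq_one_of_not_dvd_orderOf (hG : IsPGroup p G) {g : G} (h : ¬ p ∣ orderOf g) :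
    g = 1 := by
  obtain ⟨k, hk⟩ := IsPGroup.iff_orderOf.mp hG g
  cases k with
  | zero => rwa [pow_zero, orderOf_eq_one_iff] at hk
  | succ k => exact absurd (hk ▸ dvd_pow_self p k.succ_ne_zero) h

lemma IsPGroup.eq_of_prime_dvd_orderOf (hG : IsPGroup p G) {g : G} {q : ℕ} (hq : q.Prime)
    (h : q ∣ orderOf g) : q = p := by
  obtain ⟨k, hk⟩ := IsPGroup.iff_orderOf.mp hG g
  exact (Nat.prime_dvd_prime_iff_eq hq Fact.out).mp (hq.dvd_of_dvd_pow (hk ▸ h))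

end PGroup

/-- A `π'`-element. -/
def IsPiPrimeElement {G : Type*} [Group G] (π : Finset ℕ) (g : G) : Prop :=
  ∀ q ∈ π, ¬ q ∣ orderOf g

namespace IsPiPrimeElement

variable {G : Type*} [Group G] {π : Finset ℕ} {g : G}

lemma map {H : Type*} [Group H] (h : IsPiPrimeElement π g) (f : G →* H) :
    IsPiPrimeElement π (f g) :=
  fun q hq hdvd => h q hq (hdvd.trans (orderOf_map_dvd f g))

lemma eq_one [Finite G] (h : IsPiPrimeElement (Nat.card G).primeFactors g) : g = 1 := by
  by_contra hne
  obtain ⟨q, hq, hqg⟩ := Nat.exists_prime_and_dvd (mt orderOf_eq_one_iff.mp hne)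
  exact h q (Nat.mem_primeFactors.mpr ⟨hq, hqg.trans (orderOf_dvd_natCard g), Nat.card_pos.ne'⟩)
    hqg

end IsPiPrimeElement

lemma engelComm_eq_one_of_isPiPrimeElement {Q : Type*} [Group Q] [Finite Q]
    [Group.IsNilpotent Q] {π : Finset ℕ} (hπ : ∀ q ∈ π, q.Prime) {a b x : Q} {n : ℕ}
    (hb : ∀ z, IsPiPrimeElement π z → engelComm (b * z) a n = 1)
    (hx : IsPiPrimeElement π x) : engelComm x a n = 1 := by
  classical
  let e := Sylow.directProductOfNormal (G := Q) fun _ => inferInstance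
  have hpgroup (p : (Nat.card Q).primeFactors) : IsPGroup p (∀ P : Sylow p Q, P) :=
    IsPGroup.pi fun P => P.isPGroup'
  suffices engelComm (e.symm x) (e.symm a) n = 1 by
    simpa [engelComm_map] using congrArg e this
  refine engelComm_eq_one_of_forall_mulSingle {p : (Nat.card Q).primeFactors | (p : ℕ) ∈ π}
    (b := e.symm b) ?_ ?_
  · intro p hp
    have : Fact (p : ℕ).Prime := ⟨Nat.prime_of_mem_primeFactors p.2⟩
    refine (hpgroup p).eq_one_of_not_dvd_orderOf fun hdvd => hx p hp (hdvd.trans ?_)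
    exact orderOf_map_dvd ((Pi.evalMonoidHom _ p).comp e.symm.toMonoidHom) x
  · intro p hp w
    have : Fact (p : ℕ).Prime := ⟨Nat.prime_of_mem_primeFactors p.2⟩
    have hz : IsPiPrimeElement π (e (Pi.mulSingle p w)) := by
      intro q hq hdvd
      rw [MulEquiv.orderOf_eq, orderOf_piMulSingle] at hdvd
      rw [(hpgroup p).eq_of_prime_dvd_orderOf (hπ q hq) hdvd] at hq
      exact hp hq
    simpa [engelComm_map] using congrArg e.symm (hb _ hz)

lemma engelComm_mem_of_isPiPrimeElement_mk {G : Type*} [Group G] {K N : Subgroup G} [K.Normal]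
    [N.Normal] [Finite (G ⧸ K)] [Group.IsNilpotent (G ⧸ K)] (hKN : K ≤ N) {a b x : G} {n : ℕ}
    (hN : ∀ y ∈ N, engelComm (b * y) a n = 1)
    (hx : IsPiPrimeElement (Nat.card (G ⧸ N)).primeFactors (x : G ⧸ K)) :
    engelComm x a n ∈ K := by
  let ψ : G ⧸ K →* G ⧸ N := QuotientGroup.map K N (MonoidHom.id G) hKN
  have : Finite (G ⧸ N) := Finite.of_surjective ψ fun z => by
    obtain ⟨y, rfl⟩ := QuotientGroup.mk_surjective z
    exact ⟨y, rfl⟩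
  rw [← QuotientGroup.eq_one_iff, ← QuotientGroup.mk'_apply, engelComm_map]
  refine engelComm_eq_one_of_isPiPrimeElement (fun q => Nat.prime_of_mem_primeFactors)
    (b := QuotientGroup.mk' K b) (fun z hz => ?_) hx
  obtain ⟨y, rfl⟩ := QuotientGroup.mk'_surjective K z
  have hy : y ∈ N := (QuotientGroup.eq_one_iff y).mp (hz.map ψ).eq_one
  rw [← map_mul, ← engelComm_map, hN y hy, map_one]

section Profinite

variable {G : Type*} [Group G] [TopologicalSpace G] [IsTopologicalGroup G] [CompactSpace G]
  [TotallyDisconnectedSpace G]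

lemma exists_mul_mem_of_iUnion_isClosed_eq_univ {ι : Type*} [Countable ι]
    {C : ι → Set G} (hC : ∀ i, IsClosed (C i)) (hcover : ⋃ i, C i = Set.univ) :
    ∃ i, ∃ b : G, ∃ N : OpenNormalSubgroup G, ∀ y ∈ N, b * y ∈ C i := by
  obtain ⟨i, b, hb⟩ := nonempty_interior_of_iUnion_of_closed hC hcover
  obtain ⟨N, hN⟩ := ProfiniteGrp.exist_openNormalSubgroup_sub_open_nhds_of_one
    (isOpen_interior.preimage (continuous_const_mul b)) (by simpa using hb)
  exact ⟨i, b, N, fun y hy => interior_subset (hN hy)⟩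

lemma eq_one_of_forall_mem_openNormalSubgroup {g : G}
    (h : ∀ N : OpenNormalSubgroup G, g ∈ N) : g = 1 := by
  by_contra hg
  obtain ⟨N, hN⟩ := ProfiniteGrp.exist_openNormalSubgroup_sub_open_nhds_of_one
    isClosed_singleton.isOpen_compl (Ne.symm hg)
  exact hN (h N) rfl

end Profinite

theorem stmt6_general {G : Type*} [Group G] [TopologicalSpace G] [IsTopologicalGroup G]
    [CompactSpace G] [TotallyDisconnectedSpace G]
    (hnil : ∀ (N : Subgroup G) [N.Normal], IsOpen (N : Set G) → Group.IsNilpotent (G ⧸ N))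
    (a : G) (ha : ∀ x : G, ∃ n : ℕ, 0 < n ∧ engelComm x a n = 1) :
    ∃ (n : ℕ) (π : Finset ℕ), 0 < n ∧ (∀ q ∈ π, q.Prime) ∧
      ∀ x : G, memOpiPrime π x → engelComm x a n = 1 := by
  have hcover : ⋃ m : ℕ, {x : G | engelComm x a (m + 1) = 1} = Set.univ := by
    refine Set.eq_univ_of_forall fun x => Set.mem_iUnion.mpr ?_
    obtain ⟨n, hn, hx⟩ := ha x
    exact ⟨n - 1, by rwa [Set.mem_ofPred_eq, Nat.sub_add_cancel hn]⟩
  obtain ⟨m, b, N, hN⟩ := exists_mul_mem_of_iUnion_isClosed_eq_univ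
    (fun m => isClosed_eq (continuous_engelComm a (m + 1)) continuous_const) hcover
  refine ⟨m + 1, (Nat.card (G ⧸ (N : Subgroup G))).primeFactors, m.succ_pos,
    fun q => Nat.prime_of_mem_primeFactors, fun x hx => ?_⟩
  refine eq_one_of_forall_mem_openNormalSubgroup fun M => ?_
  have hK : IsOpen ((M ⊓ N : Subgroup G) : Set G) := M.isOpen.inter N.isOpen
  have := Subgroup.quotient_finite_of_isOpen _ hK
  have := hnil _ hK
  exact (Subgroup.mem_inf.mp
    (engelComm_mem_of_isPiPrimeElement_mk inf_le_right hN (hx _ hK))).1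

theorem stmt6 {G : Type*} [Group G] [TopologicalSpace G] [IsTopologicalGroup G]
    [CompactSpace G] [T2Space G] [TotallyDisconnectedSpace G]
    (hnil : ∀ (N : Subgroup G) [N.Normal], IsOpen (N : Set G) → Group.IsNilpotent (G ⧸ N))
    (a : G) (ha : ∀ x : G, ∃ n : ℕ, 0 < n ∧ engelComm x a n = 1) :
    ∃ (n : ℕ) (π : Finset ℕ), 0 < n ∧ (∀ q ∈ π, q.Prime) ∧
      ∀ x : G, memOpiPrime π x → engelComm x a n = 1 :=
  stmt6_general hnil a ha
end

section
/- Let p be a prime, k a positive integer, and G a finite group such that G = N·P where N = O_{p'}(G) is the maximal normal p'-subgroup and P is a Sylow p-subgroup. Suppose N = ⟨g_1, ..., g_s⟩ and P = ⟨h_1, ..., h_t⟩. Then [N, P] is generated by the G-conjugates of the commutators [g_i, h_j, h_j, ..., h_j] (k copies of h_j) for 1 ≤ i ≤ s, 1 ≤ j ≤ t. -/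
/-!
Work modulo `K`, the normal closure of the iterated commutators. If `x` lies in a normal
`p'`-subgroup and `y` has `p`-power order, then `[x, y, y] = 1` forces `[x, y] = 1`: the element
`z = [x, y]` commutes with `y`, so `[x, y ^ n] = z ^ n`, whence `z ^ (p ^ a) = 1` while `z` is a
`p'`-element. Iterating, `[x, y, …, y] = 1` forces `x` and `y` to commute. Hence modulo `K` every
`g i` commutes with every `h j`, so `[N, P] ≤ K`. Conversely `[N, P]` contains every iterated
commutator, and it is normal because it is normalized by both `N` and `P`, which generate `G`.
-/

open scoped commutatorElement

section EngelCommutator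

variable {G G' : Type*} [Group G] [Group G']

theorem engelComm_succ' (x y : G) : ∀ n, engelComm x y (n + 1) = engelComm ⁅x, y⁆ y n
  | 0 => rfl
  | n + 1 => congrArg (⁅·, y⁆) (engelComm_succ' x y n)

theorem map_engelComm (f : G →* G') (x y : G) :
    ∀ n, f (engelComm x y n) = engelComm (f x) (f y) n
  | 0 => rfl
  | n + 1 => by rw [engelComm, engelComm, map_commutatorElement, map_engelComm f x y n]

theorem Subgroup.Normal.commutatorElement_mem {N : Subgroup G} (hN : N.Normal) {x : G}
    (hx : x ∈ N) (y : G) : ⁅x, y⁆ ∈ N :=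
  Subgroup.commutator_le_left N ⊤ (Subgroup.commutator_mem_commutator hx (Subgroup.mem_top y))

theorem Subgroup.Normal.engelComm_mem {N : Subgroup G} (hN : N.Normal) {x : G} (hx : x ∈ N)
    (y : G) : ∀ n, engelComm x y n ∈ N
  | 0 => hx
  | n + 1 => hN.commutatorElement_mem (hN.engelComm_mem hx y n) y

theorem engelComm_succ_mem_commutator {N H : Subgroup G} (hN : N.Normal) {x y : G} (hx : x ∈ N)
    (hy : y ∈ H) (n : ℕ) : engelComm x y (n + 1) ∈ ⁅N, H⁆ :=
  Subgroup.commutator_mem_commutator (hN.engelComm_mem hx y n) hy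

end EngelCommutator

section Coprime

variable {G : Type*} [Group G]

theorem eq_one_of_pow_prime_pow_eq_one {M : Type*} [Monoid M] {p : ℕ} [Fact p.Prime] {z : M}
    (hz : ¬ p ∣ orderOf z) {a : ℕ} (h : z ^ p ^ a = 1) : z = 1 :=
  (pow_eq_one_iff_of_coprime
    ((((Fact.out : p.Prime).coprime_iff_not_dvd).mpr hz).pow_left a)).mp
    ⟨h, pow_orderOf_eq_one z⟩

theorem commutatorElement_pow_right_of_commute {x y : G} (h : Commute ⁅x, y⁆ y) :
    ∀ n : ℕ, ⁅x, y ^ n⁆ = ⁅x, y⁆ ^ n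
  | 0 => by rw [pow_zero, pow_zero, commutatorElement_one_right]
  | n + 1 => by
    rw [pow_succ', commutatorElement_mul_right_eq_mul_conj,
      commutatorElement_pow_right_of_commute h n, mul_assoc _ y, ← (h.pow_left n).eq,
      ← mul_assoc, mul_inv_cancel_right, pow_succ']

theorem commute_of_commute_commutatorElement {p : ℕ} [Fact p.Prime] {x y : G} {a : ℕ}
    (hy : y ^ p ^ a = 1) (hp' : ¬ p ∣ orderOf ⁅x, y⁆) (h : Commute ⁅x, y⁆ y) : Commute x y :=
  commutatorElement_eq_one_iff_commute.mp <| eq_one_of_pow_prime_pow_eq_one hp' <| by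
    rw [← commutatorElement_pow_right_of_commute h, hy, commutatorElement_one_right]

theorem commute_of_engelComm_eq_one {p : ℕ} [Fact p.Prime] {M : Subgroup G} (hM : M.Normal)
    (hMp' : ∀ z ∈ M, ¬ p ∣ orderOf z) {y : G} {a : ℕ} (hy : y ^ p ^ a = 1) {x : G}
    (hx : x ∈ M) {n : ℕ} (h : engelComm x y n = 1) : Commute x y := by
  induction n generalizing x with
  | zero => rw [show x = 1 from h]; exact Commute.one_left y
  | succ n ih =>
    rw [engelComm_succ'] at h
    have hxy := hM.commutatorElement_mem hx y
    exact commute_of_commute_commutatorElement hy (hMp' _ hxy) (ih hxy h)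

end Coprime

section Subgroups

variable {G G' : Type*} [Group G] [Group G']

theorem Subgroup.commutator_closure_closure_eq_bot_iff {s t : Set G} :
    ⁅Subgroup.closure s, Subgroup.closure t⁆ = ⊥ ↔ ∀ x ∈ s, ∀ y ∈ t, Commute x y := by
  rw [Subgroup.commutator_eq_bot_iff_le_centralizer, Subgroup.centralizer_closure,
    Subgroup.closure_le]
  exact forall₂_congr fun x _ ↦ Subgroup.mem_centralizer_iff.trans
    (forall₂_congr fun y _ ↦ eq_comm)

theorem Subgroup.commutator_normal_of_sup_eq_top {H₁ H₂ : Subgroup G} (h : H₁ ⊔ H₂ = ⊤) :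
    ⁅H₁, H₂⁆.Normal :=
  Subgroup.normalizer_eq_top_iff.mp <| top_unique <| h ▸
    sup_le (Subgroup.normalizer_commutator_ge_left H₁ H₂)
      (Subgroup.normalizer_commutator_ge_right H₁ H₂)

theorem Subgroup.not_dvd_orderOf_of_mem_map {p : ℕ} {N : Subgroup G}
    (hN : ∀ z ∈ N, ¬ p ∣ orderOf z) (f : G →* G') : ∀ z ∈ N.map f, ¬ p ∣ orderOf z := by
  rintro _ ⟨z, hz, rfl⟩ hdvd
  exact hN z hz (hdvd.trans (orderOf_map_dvd f z))

end Subgroups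

theorem stmt7_general {G : Type*} [Group G] (p : ℕ) [Fact p.Prime] (k : ℕ) (hk : 0 < k)
    (N : Subgroup G) (hNnormal : N.Normal) (hNp' : ∀ g ∈ N, ¬ p ∣ orderOf g)
    (P : Sylow p G) (hNP : N ⊔ (P : Subgroup G) = ⊤)
    (s t : ℕ) (g : Fin s → G) (h : Fin t → G)
    (hggen : Subgroup.closure (Set.range g) = N)
    (hhgen : Subgroup.closure (Set.range h) = (P : Subgroup G)) :
    ⁅N, (P : Subgroup G)⁆ =
      Subgroup.normalClosure {z : G | ∃ i j, z = engelComm (g i) (h j) k} := by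
  have hgN i : g i ∈ N := hggen ▸ Subgroup.subset_closure (Set.mem_range_self i)
  have hhP j : h j ∈ (P : Subgroup G) := hhgen ▸ Subgroup.subset_closure (Set.mem_range_self j)
  set K := Subgroup.normalClosure {z : G | ∃ i j, z = engelComm (g i) (h j) k}
  set π := QuotientGroup.mk' K
  apply le_antisymm
  · rw [← QuotientGroup.ker_mk' K, ← Subgroup.map_eq_bot_iff, Subgroup.map_commutator,
      ← hggen, ← hhgen, MonoidHom.map_closure, MonoidHom.map_closure,
      Subgroup.commutator_closure_closure_eq_bot_iff]
    rintro _ ⟨_, ⟨i, rfl⟩, rfl⟩ _ ⟨_, ⟨j, rfl⟩, rfl⟩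
    obtain ⟨a, ha⟩ := P.isPGroup' ⟨h j, hhP j⟩
    have hpow : π (h j) ^ p ^ a = 1 := by
      rw [← map_pow, show h j ^ p ^ a = 1 by simpa using congrArg Subtype.val ha, map_one]
    have hengel : engelComm (π (g i)) (π (h j)) k = 1 := by
      rw [← map_engelComm, QuotientGroup.mk'_apply, QuotientGroup.eq_one_iff]
      exact Subgroup.subset_normalClosure ⟨i, j, rfl⟩
    exact commute_of_engelComm_eq_one (hNnormal.map π (QuotientGroup.mk'_surjective K))
      (Subgroup.not_dvd_orderOf_of_mem_map hNp' π) hpow (Subgroup.mem_map_of_mem π (hgN i)) hengel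
  · have := Subgroup.commutator_normal_of_sup_eq_top hNP
    refine Subgroup.normalClosure_le_normal ?_
    rintro _ ⟨i, j, rfl⟩
    obtain ⟨m, rfl⟩ := Nat.exists_eq_add_one_of_ne_zero hk.ne'
    exact engelComm_succ_mem_commutator hNnormal (hgN i) (hhP j) m

theorem stmt7 {G : Type*} [Group G] [Finite G] (p : ℕ) [Fact p.Prime] (k : ℕ) (hk : 0 < k)
    (N : Subgroup G) (hNnormal : N.Normal) (hNp' : ∀ g ∈ N, ¬ p ∣ orderOf g)
    (hNmax : ∀ M : Subgroup G, M.Normal → (∀ g ∈ M, ¬ p ∣ orderOf g) → M ≤ N)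
    (P : Sylow p G) (hNP : N ⊔ (P : Subgroup G) = ⊤)
    (s t : ℕ) (g : Fin s → G) (h : Fin t → G)
    (hgN : ∀ i, g i ∈ N) (hggen : Subgroup.closure (Set.range g) = N)
    (hhP : ∀ j, h j ∈ (P : Subgroup G)) (hhgen : Subgroup.closure (Set.range h) = (P : Subgroup G)) :
    ⁅N, (P : Subgroup G)⁆ =
      Subgroup.normalClosure {z : G | ∃ i j, z = engelComm (g i) (h j) k} :=
  stmt7_general p k hk N hNnormal hNp' P hNP s t g h hggen hhgen
end
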